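/- Let χ ∈ ℚ^r lie in the asymptotic chamber χ_1 − χ_2 > n−1, …, χ_{r−1} − χ_r > n−1. Then the r-multipartition Λ^max of n with λ^1 = (n) and all other components empty (i.e., all n boxes in a single row of the component i = 1 maximizing Σ_{x=0}^{n-1}(χ_i + x), equivalently maximizing χ_i) satisfies Λ^max ≥_χ M for every r-multipartition M of n; in particular it is the maximum element of the order ≥_χ on r-multipartitions of n. -/

import Mathlib

open Finset

/-- Boxes of a multipartition, as triples (component, (row, col)). -/
def mbBoxes {r : ℕ} (Λ : Fin r → YoungDiagram) : Finset (Fin r × ℕ × ℕ) :=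
  Finset.univ.biUnion fun i => (Λ i).cells.image fun c => (i, c)

/-- Shifted content of a box (i, (y, x)): χ i + x - y. -/
def cont {r : ℕ} (χ : Fin r → ℚ) (b : Fin r × ℕ × ℕ) : ℚ :=
  χ b.1 + (b.2.2 : ℚ) - (b.2.1 : ℚ)

/-- Λ is an r-multipartition of n. -/
def isMP {r : ℕ} (n : ℕ) (Λ : Fin r → YoungDiagram) : Prop :=
  ∑ i, (Λ i).card = n

/-- The order ≥_χ : a bijection of boxes with contents of Λ-boxes dominating. -/
def contGE {r : ℕ} (χ : Fin r → ℚ) (Λ M : Fin r → YoungDiagram) : Prop :=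
  ∃ e : ↥(mbBoxes Λ) ≃ ↥(mbBoxes M),
    ∀ b : ↥(mbBoxes Λ), cont χ (b : Fin r × ℕ × ℕ) ≥ cont χ ((e b : Fin r × ℕ × ℕ))

/-- χ is generic for n: χ i - χ j avoids {0, ±1, …, ±(n-1)} for i ≠ j. -/
def generic (n : ℕ) {r : ℕ} (χ : Fin r → ℚ) : Prop :=
  ∀ i j : Fin r, i ≠ j → ∀ k : ℤ, k.natAbs < n → χ i - χ j ≠ (k : ℚ)

/-- Adjacency with explicit witnesses: Λ∖M lives in component l, M∖Λ in component m,
and they correspond under translation by (dy, dx). -/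
def adjWitness {r : ℕ} (Λ M : Fin r → YoungDiagram) (l m : Fin r) (dy dx : ℤ) : Prop :=
  (∀ i, i ≠ l → ∀ c ∈ (Λ i).cells, c ∈ (M i).cells) ∧
  (∀ i, i ≠ m → ∀ c ∈ (M i).cells, c ∈ (Λ i).cells) ∧
  (∀ y x : ℕ, ((y, x) ∈ (Λ l).cells ∧ (y, x) ∉ (M l).cells) ↔
    ∃ y' x' : ℕ, ((y', x') ∈ (M m).cells ∧ (y', x') ∉ (Λ m).cells) ∧
      (y' : ℤ) = (y : ℤ) + dy ∧ (x' : ℤ) = (x : ℤ) + dx)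

def adjacent {r : ℕ} (Λ M : Fin r → YoungDiagram) : Prop :=
  ∃ l m dy dx, adjWitness Λ M l m dy dx

/-- One step of the adjacency order. -/
def adjStep {r : ℕ} (χ : Fin r → ℚ) (Λ M : Fin r → YoungDiagram) : Prop :=
  adjacent Λ M ∧ contGE χ Λ M

/-- The adjacency order ⊵_χ : transitive closure of single steps. -/
def adjOrder {r : ℕ} (χ : Fin r → ℚ) : (Fin r → YoungDiagram) → (Fin r → YoungDiagram) → Prop :=
  Relation.ReflTransGen (adjStep χ)

/-- Multiset of shifted contents of the boxes of Λ. -/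
def contMultiset {r : ℕ} (χ : Fin r → ℚ) (Λ : Fin r → YoungDiagram) : Multiset ℚ :=
  (mbBoxes Λ).val.map (cont χ)

/-- χ lies in the asymptotic chamber: χ_i − χ_{i+1} > n − 1. -/
def asymptotic (n : ℕ) {r : ℕ} (χ : Fin r → ℚ) : Prop :=
  ∀ i : ℕ, ∀ h : i + 1 < r, χ ⟨i, Nat.lt_of_succ_lt h⟩ - χ ⟨i + 1, h⟩ > (n : ℚ) - 1

/-- Concatenated padded row-length sequence: Λ_{n·k+i} = λ^{k+1}_i (0-indexed here). -/
def rowSeq (n : ℕ) {r : ℕ} (Λ : Fin r → YoungDiagram) (t : ℕ) : ℕ :=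
  if h : t / n < r then (Λ ⟨t / n, h⟩).rowLen (t % n) else 0

/-- Shifted contents sorted in decreasing order. -/
def descContents {r : ℕ} (χ : Fin r → ℚ) (Λ : Fin r → YoungDiagram) : List ℚ :=
  (contMultiset χ Λ).sort (· ≥ ·)


section MaxAux

lemma mem_mbBoxes' {r : ℕ} {Λ : Fin r → YoungDiagram} {i : Fin r} {y x : ℕ} :
    (i, y, x) ∈ mbBoxes Λ ↔ (y, x) ∈ Λ i := by
  simp only [mbBoxes, Finset.mem_biUnion, Finset.mem_image, Finset.mem_univ, true_and,
    Prod.mk.injEq, YoungDiagram.mem_cells, Prod.exists]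
  constructor
  · rintro ⟨j, a, b, h, rfl, rfl, rfl⟩; exact h
  · intro h; exact ⟨i, y, x, h, rfl, rfl, rfl⟩

lemma card_mbBoxes {r : ℕ} (Λ : Fin r → YoungDiagram) :
    (mbBoxes Λ).card = ∑ i, (Λ i).card := by
  rw [mbBoxes, Finset.card_biUnion]
  · refine Finset.sum_congr rfl fun i _ => ?_
    exact Finset.card_image_of_injective _ (fun a b h => by simpa using h)
  · intro a _ b _ hab
    simp only [Finset.disjoint_left, Finset.mem_image]
    rintro c ⟨u, _, rfl⟩ ⟨v, _, h⟩
    exact hab ((by simpa using (Prod.ext_iff.mp h).1) : b = a).symm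

lemma lam0_mem (n : ℕ) {y x : ℕ} :
    (y, x) ∈ YoungDiagram.ofRowLens [n] (by rw [List.sortedGE_iff_pairwise]; simp) ↔ y = 0 ∧ x < n := by
  rw [YoungDiagram.mem_ofRowLens]
  simp [Nat.lt_one_iff, and_comm]

lemma lam0_card (n : ℕ) : (YoungDiagram.ofRowLens [n] (by rw [List.sortedGE_iff_pairwise]; simp)).card = n := by
  have h : (YoungDiagram.ofRowLens [n] (by rw [List.sortedGE_iff_pairwise]; simp : ([n] : List ℕ).SortedGE)).cells
      = (Finset.range n).image (fun x => (0, x)) := by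
    ext ⟨y, x⟩
    rw [YoungDiagram.mem_cells, lam0_mem n]
    simp [eq_comm]
    tauto
  rw [YoungDiagram.card, h,
    Finset.card_image_of_injective _ (by intro a b h; simpa using h)]
  simp

lemma empty_mem' {y x : ℕ} : (y, x) ∉ YoungDiagram.ofRowLens [] (by rw [List.sortedGE_iff_pairwise]; simp) := by
  rw [YoungDiagram.mem_ofRowLens]; simp

lemma empty_card' : (YoungDiagram.ofRowLens [] (by rw [List.sortedGE_iff_pairwise]; simp : ([] : List ℕ).SortedGE)).card = 0 := by
  rw [YoungDiagram.card, Finset.card_eq_zero]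
  ext ⟨y, x⟩
  simp only [Finset.notMem_empty, iff_false]
  exact fun h => empty_mem' ((YoungDiagram.mem_cells _).mp h)

lemma box_col_lt {μ : YoungDiagram} {y x : ℕ} (h : (y, x) ∈ μ) : x < μ.card := by
  have hsub : (Finset.range (x + 1)).image (fun t => (y, t)) ⊆ μ.cells := by
    intro c hc
    simp only [Finset.mem_image, Finset.mem_range] at hc
    obtain ⟨t, ht, rfl⟩ := hc
    exact μ.up_left_mem le_rfl (Nat.lt_succ_iff.mp ht) h
  have hcard := Finset.card_le_card hsub
  rw [Finset.card_image_of_injective _ (fun a b hh => by simpa using hh),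
    Finset.card_range] at hcard
  exact lt_of_lt_of_le (Nat.lt_succ_self x) hcard

lemma key_le_index {r : ℕ} {M : Fin r → YoungDiagram}
    (L : List ↥(mbBoxes M)) (hnd : L.Nodup) (hmem : ∀ c : ↥(mbBoxes M), c ∈ L)
    (hs : L.Pairwise (fun a b : ↥(mbBoxes M) => a.1.2.2 ≤ b.1.2.2))
    (j : Fin L.length) : ((L.get j : Fin r × ℕ × ℕ)).2.2 ≤ (j : ℕ) := by
  classical
  rcases hb0 : L.get j with ⟨⟨i, y, x⟩, hb⟩
  show x ≤ (j : ℕ)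
  have hmemM : ∀ t, t < x → ((i, y, t) : Fin r × ℕ × ℕ) ∈ mbBoxes M := fun t ht =>
    mem_mbBoxes'.mpr ((M i).up_left_mem le_rfl ht.le (mem_mbBoxes'.mp hb))
  have hpg := List.pairwise_iff_get.mp hs
  have hp : ∀ t : Fin x, L.idxOf (⟨(i, y, t), hmemM t t.2⟩ : ↥(mbBoxes M)) < (j : ℕ) := by
    intro t
    set c : ↥(mbBoxes M) := ⟨(i, y, t), hmemM t t.2⟩ with hc
    have hlt : L.idxOf c < L.length := List.idxOf_lt_length_iff.mpr (hmem c)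
    have hg : L.get ⟨L.idxOf c, hlt⟩ = c := List.idxOf_get hlt
    rcases lt_trichotomy (L.idxOf c) (j : ℕ) with h | h | h
    · exact h
    · exfalso
      have heq : L.get j = c := by
        rw [← hg]; congr 1; ext; exact h.symm
      rw [hb0, hc] at heq
      have h2 := Subtype.ext_iff.mp heq
      simp only [Prod.mk.injEq] at h2
      omega
    · exfalso
      have hle := hpg j ⟨L.idxOf c, hlt⟩ h
      rw [hb0, hg, hc] at hle
      simp only at hle
      omega
  have finj : Function.Injective (fun t : Fin x =>
      (⟨L.idxOf (⟨(i, y, t), hmemM t t.2⟩ : ↥(mbBoxes M)), hp t⟩ : Fin (j : ℕ))) := by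
    intro t t' h
    simp only [Fin.mk.injEq] at h
    have h1 : L.idxOf (⟨(i, y, t.1), hmemM t t.2⟩ : ↥(mbBoxes M)) < L.length :=
      List.idxOf_lt_length_iff.mpr (hmem _)
    have h2 : L.idxOf (⟨(i, y, t'.1), hmemM t' t'.2⟩ : ↥(mbBoxes M)) < L.length :=
      List.idxOf_lt_length_iff.mpr (hmem _)
    have e1 : L.get ⟨_, h1⟩ = (⟨(i, y, t.1), hmemM t t.2⟩ : ↥(mbBoxes M)) := List.idxOf_get h1
    have e2 : L.get ⟨_, h2⟩ = (⟨(i, y, t'.1), hmemM t' t'.2⟩ : ↥(mbBoxes M)) :=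
      List.idxOf_get h2
    have e3 : L.get ⟨_, h1⟩ = L.get ⟨_, h2⟩ := by congr 1; exact Fin.ext h
    rw [e1, e2] at e3
    have h4 := Subtype.ext_iff.mp e3
    simp only [Prod.mk.injEq] at h4
    exact Fin.ext h4.2.2
  have := Fintype.card_le_of_injective _ finj
  simpa using this

lemma chi_gap (n r : ℕ) (hr : 0 < r) (χ : Fin r → ℚ) (hasym : asymptotic n χ) (hn : 1 ≤ n) :
    ∀ i : Fin r, i ≠ ⟨0, hr⟩ → χ ⟨0, hr⟩ - χ i > (n : ℚ) - 1 := by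
  have key : ∀ k : ℕ, ∀ hk : k < r, k ≠ 0 → χ ⟨0, hr⟩ - χ ⟨k, hk⟩ > (n : ℚ) - 1 := by
    intro k
    induction k with
    | zero => intro hk h0; exact absurd rfl h0
    | succ m ih =>
      intro hk _
      have h1 := hasym m hk
      rcases Nat.eq_zero_or_pos m with rfl | hm
      · exact h1
      · have h2 := ih (Nat.lt_of_succ_lt hk) (Nat.pos_iff_ne_zero.mp hm)
        have hn1 : (1 : ℚ) ≤ (n : ℚ) := by exact_mod_cast hn
        linarith
  intro i hi
  have hne : i.val ≠ 0 := fun h => hi (Fin.ext h)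
  have := key i.val i.2 hne
  simpa using this

end MaxAux

/-- in the asymptotic chamber, the one-row multipartition in the first
component is the maximum of ≥_χ. -/
theorem max_element (n r : ℕ) (hr : 0 < r) (χ : Fin r → ℚ) (hasym : asymptotic n χ)
    (Λmax : Fin r → YoungDiagram)
    (hmax : Λmax = fun i => if i = ⟨0, hr⟩ then YoungDiagram.ofRowLens [n] (by simp [List.sortedGE_iff_pairwise]) else
      YoungDiagram.ofRowLens [] (by simp [List.sortedGE_iff_pairwise])) :
    isMP n Λmax ∧ ∀ M : Fin r → YoungDiagram, isMP n M → contGE χ Λmax M := by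
  classical
  have hL0 : Λmax ⟨0, hr⟩ = YoungDiagram.ofRowLens [n] (by simp [List.sortedGE_iff_pairwise]) := by rw [hmax]; simp
  have hLi : ∀ i : Fin r, i ≠ ⟨0, hr⟩ → Λmax i = YoungDiagram.ofRowLens [] (by simp [List.sortedGE_iff_pairwise]) := by
    intro i hi; rw [hmax]; simp [hi]
  have hA : ∀ b : Fin r × ℕ × ℕ, b ∈ mbBoxes Λmax →
      b.1 = (⟨0, hr⟩ : Fin r) ∧ b.2.1 = 0 ∧ b.2.2 < n := by
    rintro ⟨i, y, x⟩ hb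
    rw [mem_mbBoxes'] at hb
    by_cases hi : i = ⟨0, hr⟩
    · subst hi
      rw [hL0] at hb
      have h := (lam0_mem n).mp hb
      exact ⟨rfl, h.1, h.2⟩
    · rw [hLi i hi] at hb
      exact absurd hb empty_mem'
  have hmemA : ∀ x, x < n → ((⟨0, hr⟩, 0, x) : Fin r × ℕ × ℕ) ∈ mbBoxes Λmax := by
    intro x hx
    rw [mem_mbBoxes', hL0]
    exact (lam0_mem n).mpr ⟨rfl, hx⟩
  have hMP : isMP n Λmax := by
    unfold isMP
    rw [Finset.sum_eq_single (⟨0, hr⟩ : Fin r)]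
    · rw [hL0]; exact lam0_card n
    · intro i _ hi; rw [hLi i hi]; exact empty_card'
    · intro h; exact absurd (Finset.mem_univ _) h
  refine ⟨hMP, ?_⟩
  intro M hM
  haveI hdec : DecidableRel (fun a b : ↥(mbBoxes M) => a.1.2.2 ≤ b.1.2.2) :=
    fun a b => Nat.decLe _ _
  haveI hto : IsTotal ↥(mbBoxes M) (fun a b => a.1.2.2 ≤ b.1.2.2) :=
    ⟨fun a b => Nat.le_total _ _⟩
  haveI htr : IsTrans ↥(mbBoxes M) (fun a b => a.1.2.2 ≤ b.1.2.2) :=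
    ⟨fun a b c => Nat.le_trans⟩
  set L : List ↥(mbBoxes M) :=
    (mbBoxes M).attach.toList.insertionSort (fun a b => a.1.2.2 ≤ b.1.2.2) with hLdef
  have hnd : L.Nodup := ((List.perm_insertionSort _ _).nodup_iff).mpr (Finset.nodup_toList _)
  have hmem : ∀ c : ↥(mbBoxes M), c ∈ L := fun c => by
    rw [hLdef, List.mem_insertionSort, Finset.mem_toList]; exact Finset.mem_attach _ _
  have hlen : L.length = n := by
    rw [hLdef, List.length_insertionSort, Finset.length_toList, Finset.card_attach,
      card_mbBoxes, hM]
  have hsort : L.Pairwise (fun a b : ↥(mbBoxes M) => a.1.2.2 ≤ b.1.2.2) :=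
    List.pairwise_insertionSort _ _
  have hMcard : ∀ i : Fin r, (M i).card ≤ n := by
    intro i
    calc (M i).card ≤ ∑ j, (M j).card :=
          Finset.single_le_sum (f := fun j => (M j).card) (fun j _ => Nat.zero_le _)
            (Finset.mem_univ i)
      _ = n := hM
  refine ⟨{ toFun := fun b => L.get ⟨b.1.2.2, by rw [hlen]; exact (hA b.1 b.2).2.2⟩
            invFun := fun c => ⟨(⟨0, hr⟩, 0, L.idxOf c),
              hmemA _ (by rw [← hlen]; exact List.idxOf_lt_length_iff.mpr (hmem c))⟩
            left_inv := ?_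
            right_inv := ?_ }, ?_⟩
  · rintro ⟨⟨i, y, x⟩, hbm⟩
    obtain ⟨hi0, hy0, hxn⟩ := hA _ hbm
    simp only at hi0 hy0 hxn
    apply Subtype.ext
    show ((⟨0, hr⟩ : Fin r), 0, L.idxOf (L.get _)) = (i, y, x)
    rw [List.get_idxOf hnd]
    simp only
    rw [hi0, hy0]
  · intro c
    exact List.idxOf_get _
  · rintro ⟨⟨i, y, x⟩, hbm⟩
    obtain ⟨hi0, hy0, hxn⟩ := hA _ hbm
    simp only at hi0 hy0 hxn
    subst hi0; subst hy0
    simp only [Equiv.coe_fn_mk]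
    have hmain : ∀ J : Fin L.length, (J : ℕ) = x →
        cont χ ((⟨0, hr⟩ : Fin r), 0, x) ≥ cont χ ((L.get J : Fin r × ℕ × ℕ)) := by
      intro J hJ
      have hkey0 := key_le_index L hnd hmem hsort J
      rcases hgc : L.get J with ⟨⟨i', y', x'⟩, hcm⟩
      rw [hgc] at hkey0
      rw [hJ] at hkey0
      have hkey : x' ≤ x := hkey0
      have hx'mem : (y', x') ∈ M i' := mem_mbBoxes'.mp hcm
      have hx'n : x' < n := lt_of_lt_of_le (box_col_lt hx'mem) (hMcard i')
      show cont χ ((⟨0, hr⟩ : Fin r), 0, x) ≥ cont χ (i', y', x')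
      unfold cont
      simp only [Nat.cast_zero]
      by_cases hi' : i' = ⟨0, hr⟩
      · subst hi'
        have h1 : (x' : ℚ) ≤ (x : ℚ) := by exact_mod_cast hkey
        have h2 : (0 : ℚ) ≤ (y' : ℚ) := by positivity
        linarith
      · have hn1 : 1 ≤ n := Nat.one_le_iff_ne_zero.mpr (by omega)
        have hgap := chi_gap n r hr χ hasym hn1 i' hi'
        have h1 : (x' : ℚ) + 1 ≤ (n : ℚ) := by exact_mod_cast hx'n
        have h2 : (0 : ℚ) ≤ (y' : ℚ) := by positivity
        have h3 : (0 : ℚ) ≤ (x : ℚ) := by positivity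
        linarith
    exact hmain _ rfl
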